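/- arXiv:1003.4241 — 2 statements merged into one kernel-verified Lean document; each statement's English description precedes it below -/
import Mathlib

section
/- Let B be a commutative ring, I an ideal of B, and M, N B-modules. If there exists an N-regular sequence of length 2 contained in I, then the B-module Hom_B(M, N) also admits a regular sequence of length 2 contained in I (i.e., the same two elements form a Hom_B(M,N)-regular sequence). -/
/-!
`Hom_B(M, -)` is left exact: a non-zerodivisor `x₁` on `N` is one on `Hom_B(M, N)`, and a map
`M → N` with all values in `x₁N` lies in `x₁ Hom_B(M, N)`. Hence `Hom_B(M, N)/x₁` embeds into
`Hom_B(M, N/x₁N)`, on which `x₂` acts injectively because it does so on `N/x₁N`.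
-/

open Pointwise

namespace IsSMulRegular

section CommSemiring

variable {R M N : Type*} [CommSemiring R] [AddCommMonoid M] [Module R M] [AddCommMonoid N]
  [Module R N] {r : R}

theorem linearMap (h : IsSMulRegular N r) : IsSMulRegular (M →ₗ[R] N) r :=
  fun _ _ hfg => LinearMap.ext fun m => h congr($hfg m)

theorem mem_smul_top_linearMap_iff (h : IsSMulRegular N r) {f : M →ₗ[R] N} :
    f ∈ r • (⊤ : Submodule R (M →ₗ[R] N)) ↔ ∀ m, f m ∈ r • (⊤ : Submodule R N) := by
  simp only [Submodule.mem_smul_pointwise_iff_exists, Submodule.mem_top, true_and]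
  refine ⟨fun ⟨g, hg⟩ m => ⟨g m, congr($hg m)⟩, fun hf => ?_⟩
  -- Since `r` is regular the pointwise quotients `g m` are unique, so `g` is linear.
  choose g hg using hf
  have g_add (m m' : M) : g (m + m') = g m + g m' :=
    h <| show r • _ = r • _ by rw [smul_add, hg, hg, hg, map_add]
  have g_smul (c : R) (m : M) : g (c • m) = c • g m :=
    h <| show r • _ = r • _ by rw [smul_comm, hg, hg, map_smul]
  exact ⟨⟨⟨g, g_add⟩, g_smul⟩, LinearMap.ext hg⟩

end CommSemiring

variable {R M N : Type*} [CommRing R] [AddCommGroup M] [Module R M] [AddCommGroup N]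
  [Module R N] {r s : R}

theorem quotSMulTop_linearMap (h₁ : IsSMulRegular N r) (h₂ : IsSMulRegular (QuotSMulTop r N) s) :
    IsSMulRegular (QuotSMulTop r (M →ₗ[R] N)) s := by
  rw [isSMulRegular_quotient_iff_mem_of_smul_mem] at h₂ ⊢
  intro f hsf
  rw [h₁.mem_smul_top_linearMap_iff] at hsf ⊢
  exact fun m => h₂ (f m) (hsf m)

end IsSMulRegular

theorem hom_isWeaklyRegular_of_isWeaklyRegular_general
    (B : Type*) [CommRing B]
    (M N : Type*) [AddCommGroup M] [Module B M] [AddCommGroup N] [Module B N]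
    (x₁ x₂ : B)
    (hreg : RingTheory.Sequence.IsWeaklyRegular N [x₁, x₂]) :
    RingTheory.Sequence.IsWeaklyRegular (M →ₗ[B] N) [x₁, x₂] := by
  rw [RingTheory.Sequence.isWeaklyRegular_cons_iff,
    RingTheory.Sequence.isWeaklyRegular_singleton_iff] at hreg ⊢
  exact ⟨hreg.1.linearMap, hreg.1.quotSMulTop_linearMap hreg.2⟩

/-- If `x₁, x₂ ∈ I` form an `N`-regular sequence, then they also form a
`Hom_B(M, N)`-regular sequence. -/
theorem hom_isWeaklyRegular_of_isWeaklyRegular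
    (B : Type*) [CommRing B] (I : Ideal B)
    (M N : Type*) [AddCommGroup M] [Module B M] [AddCommGroup N] [Module B N]
    (x₁ x₂ : B) (hx₁ : x₁ ∈ I) (hx₂ : x₂ ∈ I)
    (hreg : RingTheory.Sequence.IsWeaklyRegular N [x₁, x₂]) :
    RingTheory.Sequence.IsWeaklyRegular (M →ₗ[B] N) [x₁, x₂] :=
  hom_isWeaklyRegular_of_isWeaklyRegular_general B M N x₁ x₂ hreg
end

section
/- Let R be a Noetherian local ring satisfying Serre's condition (S₂) (so R has no associated primes and depth R_p ≥ min(2, dim R_p) for all primes p), and let M be a finite R-module. Then Hom_R(M, R) satisfies (S₂): for every prime p in the support of Hom_R(M,R), depth (Hom_R(M,R))_p ≥ min(2, dim R_p). -/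
/-!
Localizing at `p`, the dual `Hom_R(M, R)_p` is `Hom_{R_p}(M_p, R_p)` because `M` is finitely
presented, so it suffices to show `depth Hom_A(K, W) ≥ min(2, depth W)` over a Noetherian local
ring `A`. Since `Hom(K, -)` is left exact, a `W`-regular sequence `x, y` stays regular on
`Hom(K, W)`: `x` acts injectively, and `Hom(K, W)/x` embeds into `Hom(K, W/xW)`, on which `y`
acts injectively. Longer regular sequences need not survive, hence the bound `2`.
-/

universe u

/-- The depth of a module over a local ring. -/
noncomputable def moduleDepth (R : Type*) [CommRing R] [IsLocalRing R]
    (M : Type*) [AddCommGroup M] [Module R M] : ℕ∞ :=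
  sSup {n : ℕ∞ | ∃ rs : List R, (rs.length : ℕ∞) = n ∧
    (∀ x ∈ rs, x ∈ IsLocalRing.maximalIdeal R) ∧ RingTheory.Sequence.IsRegular M rs}

/-- A module `M` over `R` satisfies Serre's condition `(S₂)` if
`depth M_p ≥ min(2, dim R_p)` for every prime `p` in the support of `M`. -/
def SatisfiesS2 (R : Type u) [CommRing R] (M : Type u) [AddCommGroup M] [Module R M] : Prop :=
  ∀ p : PrimeSpectrum R, p ∈ Module.support R M →
    min 2 (ringKrullDim (Localization.AtPrime p.asIdeal)) ≤
      (moduleDepth (Localization.AtPrime p.asIdeal)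
        (LocalizedModule p.asIdeal.primeCompl M) : WithBot ℕ∞)

open RingTheory.Sequence Pointwise

theorem RingTheory.Sequence.IsWeaklyRegular.take {R M : Type*} [CommRing R] [AddCommGroup M]
    [Module R M] {rs : List R} (hrs : IsWeaklyRegular M rs) (n : ℕ) :
    IsWeaklyRegular M (rs.take n) :=
  ((isWeaklyRegular_append_iff _ _ _).mp (by rwa [List.take_append_drop])).1

section LinearMap

variable {B K W : Type*} [CommRing B] [AddCommGroup K] [Module B K] [AddCommGroup W] [Module B W]

theorem IsSMulRegular.linearMap_s11 {y : B} (hy : IsSMulRegular W y) :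
    IsSMulRegular (K →ₗ[B] W) y := fun f g h =>
  LinearMap.ext fun m => hy (by simpa using LinearMap.congr_fun h m)

theorem LinearMap.mem_smul_top_of_forall_mem_smul_top {x : B} (hx : IsSMulRegular W x)
    {f : K →ₗ[B] W} (hf : ∀ m, f m ∈ x • (⊤ : Submodule B W)) :
    f ∈ x • (⊤ : Submodule B (K →ₗ[B] W)) := by
  let e := LinearEquiv.ofInjective (LinearMap.lsmul B W x) hx
  have hrange : ∀ m, f m ∈ LinearMap.range (LinearMap.lsmul B W x) := fun m => by
    obtain ⟨w, -, hw⟩ := (Submodule.mem_smul_pointwise_iff_exists _ _ _).mp (hf m)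
    exact ⟨w, hw⟩
  have hf_eq : x • (e.symm.toLinearMap ∘ₗ f.codRestrict _ hrange) = f :=
    LinearMap.ext fun m => congrArg Subtype.val (e.apply_symm_apply ⟨f m, hrange m⟩)
  exact hf_eq ▸ Submodule.smul_mem_pointwise_smul _ _ _ Submodule.mem_top

theorem IsSMulRegular.quotSMulTop_linearMap_s11 {x y : B} (hx : IsSMulRegular W x)
    (hy : IsSMulRegular (QuotSMulTop x W) y) :
    IsSMulRegular (QuotSMulTop x (K →ₗ[B] W)) y := by
  rw [isSMulRegular_quotient_iff_mem_of_smul_mem] at hy ⊢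
  intro f hyf
  refine LinearMap.mem_smul_top_of_forall_mem_smul_top hx fun m => hy _ ?_
  obtain ⟨g, -, hg⟩ := (Submodule.mem_smul_pointwise_iff_exists _ _ _).mp hyf
  rw [← LinearMap.smul_apply, ← hg, LinearMap.smul_apply]
  exact Submodule.smul_mem_pointwise_smul _ _ _ Submodule.mem_top

theorem RingTheory.Sequence.IsWeaklyRegular.linearMap_of_length_le_two {rs : List B}
    (hrs : IsWeaklyRegular W rs) (hlen : rs.length ≤ 2) : IsWeaklyRegular (K →ₗ[B] W) rs := by
  match rs, hlen with
  | [], _ => exact .nil _ _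
  | [x], _ =>
    obtain ⟨hx, -⟩ := (isWeaklyRegular_cons_iff _ _ _).mp hrs
    exact (isWeaklyRegular_cons_iff _ _ _).mpr ⟨hx.linearMap_s11, .nil _ _⟩
  | [x, y], _ =>
    obtain ⟨hx, hy, -⟩ := by simpa only [isWeaklyRegular_cons_iff] using hrs
    simp only [isWeaklyRegular_cons_iff]
    exact ⟨hx.linearMap_s11, hx.quotSMulTop_linearMap_s11 hy, .nil _ _⟩

end LinearMap

section Depth

variable {A : Type*} [CommRing A] [IsLocalRing A]

theorem LinearEquiv.moduleDepth_eq {M N : Type*} [AddCommGroup M] [Module A M]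
    [AddCommGroup N] [Module A N] (e : M ≃ₗ[A] N) : moduleDepth A M = moduleDepth A N := by
  simp only [moduleDepth, e.isRegular_congr]

theorem RingTheory.Sequence.IsRegular.length_le_moduleDepth {M : Type*} [AddCommGroup M]
    [Module A M] {rs : List A} (hrs : IsRegular M rs)
    (hmem : ∀ x ∈ rs, x ∈ IsLocalRing.maximalIdeal A) :
    (rs.length : ℕ∞) ≤ moduleDepth A M :=
  le_sSup ⟨rs, rfl, hmem, hrs⟩

theorem min_two_moduleDepth_le_moduleDepth_linearMap [IsNoetherianRing A]
    (K W : Type*) [AddCommGroup K] [Module A K] [Module.Finite A K]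
    [AddCommGroup W] [Module A W] [Module.Finite A W] [Nontrivial (K →ₗ[A] W)] :
    min 2 (moduleDepth A W) ≤ moduleDepth A (K →ₗ[A] W) := by
  rw [moduleDepth, inf_sSup_eq]
  refine iSup₂_le ?_
  rintro _ ⟨rs, rfl, hmem, hrs⟩
  have hmem' : ∀ x ∈ rs.take 2, x ∈ IsLocalRing.maximalIdeal A :=
    fun x hx => hmem x (List.mem_of_mem_take hx)
  have hreg : IsRegular (K →ₗ[A] W) (rs.take 2) :=
    (IsLocalRing.isRegular_iff_isWeaklyRegular_of_subset_maximalIdeal hmem').mpr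
      ((hrs.toIsWeaklyRegular.take 2).linearMap_of_length_le_two (List.length_take_le _ _))
  have hlen := hreg.length_le_moduleDepth hmem'
  rwa [List.length_take, Nat.mono_cast.map_min, Nat.cast_ofNat] at hlen

end Depth

theorem hom_satisfiesS2_general (R : Type u) [CommRing R] [IsNoetherianRing R]
    (hR : SatisfiesS2 R R)
    (M : Type u) [AddCommGroup M] [Module R M] [Module.Finite R M] :
    SatisfiesS2 R (M →ₗ[R] R) := by
  intro p hp
  let S := p.asIdeal.primeCompl
  let A := Localization.AtPrime p.asIdeal
  have : Module.FinitePresentation R M := Module.finitePresentation_of_finite R M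
  let e :
      LocalizedModule S (M →ₗ[R] R) ≃ₗ[A] (LocalizedModule S M →ₗ[A] LocalizedModule S R) :=
    (Module.FinitePresentation.linearEquivMapExtendScalars S).extendScalarsOfIsLocalization S A
  have : Nontrivial (LocalizedModule S (M →ₗ[R] R)) := Module.mem_support_iff.mp hp
  have : Nontrivial (LocalizedModule S M →ₗ[A] LocalizedModule S R) :=
    e.symm.nontrivial
  have hdepth := min_two_moduleDepth_le_moduleDepth_linearMap (A := A)
    (LocalizedModule S M) (LocalizedModule S R)
  have hRp := hR p <| Module.mem_support_iff_of_finite.mpr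
    ((Module.annihilator_eq_bot (R := R) (M := R)).mpr inferInstance ▸ bot_le)
  calc min 2 (ringKrullDim A)
      ≤ min 2 ((moduleDepth A (LocalizedModule S R) : ℕ∞) : WithBot ℕ∞) :=
        le_min (min_le_left _ _) hRp
    _ = ((min 2 (moduleDepth A (LocalizedModule S R)) : ℕ∞) : WithBot ℕ∞) :=
        (WithBot.coe_min _ _).symm
    _ ≤ _ := WithBot.coe_le_coe.mpr (hdepth.trans_eq e.moduleDepth_eq.symm)

/-- If a Noetherian local ring `R` satisfies `(S₂)` and `M` is a finite `R`-module, then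
`Hom_R(M, R)` satisfies `(S₂)`. -/
theorem hom_satisfiesS2 (R : Type u) [CommRing R] [IsNoetherianRing R] [IsLocalRing R]
    (hR : SatisfiesS2 R R)
    (M : Type u) [AddCommGroup M] [Module R M] [Module.Finite R M] :
    SatisfiesS2 R (M →ₗ[R] R) :=
  hom_satisfiesS2_general R hR M
end
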